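/- arXiv:2505.06142 — 11 statements merged into one kernel-verified Lean document; each statement's English description precedes it below -/
import Mathlib

section
/- Let u : ℝ → H be differentiable with i·u'(t) = A(u(t)) + B(f(t)) for all t ∈ [0,T] and u(0) = 0, and let v : ℝ → H be differentiable with i·v'(t) = −A*(v(t)) − B(g(t)) for all t ∈ [0,T] and v(0) = 0, where f, g : ℝ → Y are continuous. Then ∫₀ᵀ ⟨B*(u(T−t)), g(t)⟩_Y dt = ∫₀ᵀ ⟨f(T−t), B*(v(t))⟩_Y dt. (This is the identity (R_#ᵀ)* Jᵀ = Jᵀ Rᵀ between the response operators of the forward system i u_t − A u = B f and the adjoint system i v_t + A* v = −B g, where Jᵀ is time reversal on [0,T].) -/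
/-!
The pairing `φ t = ⟪v t, u (T - t)⟫` vanishes at both ends, since `v 0 = 0` and `u 0 = 0`.
Along the two equations the terms in `A` and `A*` cancel in `φ'`, leaving
`φ' t = I * (⟪v t, B f (T - t)⟫ - ⟪B g t, u (T - t)⟫)`; integrating over `[0, T]` gives
the identity after moving `B` across the inner products.
-/

open Complex ContinuousLinearMap

open scoped InnerProductSpace

section

variable {H : Type*} [NormedAddCommGroup H] [InnerProductSpace ℂ H]

theorem hasDerivAt_inner_reflect {u v : ℝ → H} {T t : ℝ} (hu : DifferentiableAt ℝ u (T - t))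
    (hv : DifferentiableAt ℝ v t) :
    HasDerivAt (fun s ↦ ⟪v s, u (T - s)⟫_ℂ)
      (⟪deriv v t, u (T - t)⟫_ℂ - ⟪v t, deriv u (T - t)⟫_ℂ) t := by
  have hreflect : HasDerivAt (fun s ↦ u (T - s)) (-deriv u (T - t)) t := by
    simpa [Function.comp_def] using hu.hasDerivAt.scomp t ((hasDerivAt_id t).const_sub T)
  refine (hv.hasDerivAt.inner ℂ hreflect).congr_deriv ?_
  rw [inner_neg_right]
  ring

theorem inner_sub_inner_eq_of_forward_adjoint [CompleteSpace H] (A : H →L[ℂ] H)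
    {x y a b u' v' : H} (hu : I • u' = A x + a) (hv : I • v' = -adjoint A y - b) :
    ⟪v', x⟫_ℂ - ⟪y, u'⟫_ℂ = I * (⟪y, a⟫_ℂ - ⟪b, x⟫_ℂ) := by
  have hu' : u' = -I • (A x + a) := by rw [← hu, smul_smul]; simp
  have hv' : v' = I • (adjoint A y + b) := by
    calc v' = -I • (I • v') := by rw [smul_smul]; simp
      _ = I • (adjoint A y + b) := by rw [hv]; module
  subst hu' hv'
  simp only [inner_smul_left, inner_smul_right, inner_add_left, inner_add_right,
    adjoint_inner_left, conj_I]
  ring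

theorem integral_inner_reflect_eq_of_forward_adjoint [CompleteSpace H] (A : H →L[ℂ] H)
    {T : ℝ} (hT : 0 ≤ T) {F G : ℝ → H} (hF : Continuous F) (hG : Continuous G) {u v : ℝ → H}
    (hu : Differentiable ℝ u) (hv : Differentiable ℝ v)
    (hueq : ∀ t ∈ Set.Icc 0 T, I • deriv u t = A (u t) + F t) (hu0 : u 0 = 0)
    (hveq : ∀ t ∈ Set.Icc 0 T, I • deriv v t = -adjoint A (v t) - G t) (hv0 : v 0 = 0) :
    ∫ t in (0 : ℝ)..T, ⟪G t, u (T - t)⟫_ℂ = ∫ t in (0 : ℝ)..T, ⟪v t, F (T - t)⟫_ℂ := by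
  have hreflect : Continuous fun t : ℝ ↦ T - t := continuous_const.sub continuous_id
  have hFv : Continuous fun t ↦ ⟪v t, F (T - t)⟫_ℂ := hv.continuous.inner (hF.comp hreflect)
  have hGu : Continuous fun t ↦ ⟪G t, u (T - t)⟫_ℂ := hG.inner (hu.continuous.comp hreflect)
  have hderiv : ∀ t ∈ Set.uIcc 0 T, HasDerivAt (fun s ↦ ⟪v s, u (T - s)⟫_ℂ)
      (I * (⟪v t, F (T - t)⟫_ℂ - ⟪G t, u (T - t)⟫_ℂ)) t := by
    intro t ht
    rw [Set.uIcc_of_le hT] at ht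
    have hTt : T - t ∈ Set.Icc 0 T := ⟨by linarith [ht.2], by linarith [ht.1]⟩
    rw [← inner_sub_inner_eq_of_forward_adjoint A (hueq _ hTt) (hveq t ht)]
    exact hasDerivAt_inner_reflect (hu _) (hv t)
  have hFTC := intervalIntegral.integral_eq_sub_of_hasDerivAt hderiv
    ((continuous_const.mul (hFv.sub hGu)).intervalIntegrable 0 T)
  have hends : ⟪v T, u (T - T)⟫_ℂ - ⟪v 0, u (T - 0)⟫_ℂ = 0 := by simp [hu0, hv0]
  rw [hends, intervalIntegral.integral_const_mul,
    intervalIntegral.integral_sub (hFv.intervalIntegrable 0 T) (hGu.intervalIntegrable 0 T),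
    mul_eq_zero, or_iff_right I_ne_zero, sub_eq_zero] at hFTC
  exact hFTC.symm

end

/-- The paper's inner product `⟨a, b⟩`, linear in `a`, is Mathlib's `inner ℂ b a`. -/
theorem stmt_0 {H Y : Type*}
    [NormedAddCommGroup H] [InnerProductSpace ℂ H] [CompleteSpace H]
    [NormedAddCommGroup Y] [InnerProductSpace ℂ Y] [CompleteSpace Y]
    (A : H →L[ℂ] H) (B : Y →L[ℂ] H) (T : ℝ) (hT : 0 < T)
    (f g : ℝ → Y) (hf : Continuous f) (hg : Continuous g)
    (u v : ℝ → H) (hu : Differentiable ℝ u) (hv : Differentiable ℝ v)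
    (hueq : ∀ t ∈ Set.Icc (0 : ℝ) T,
      Complex.I • deriv u t = A (u t) + B (f t))
    (hu0 : u 0 = 0)
    (hveq : ∀ t ∈ Set.Icc (0 : ℝ) T,
      Complex.I • deriv v t = -((ContinuousLinearMap.adjoint A) (v t)) - B (g t))
    (hv0 : v 0 = 0) :
    ∫ t in (0 : ℝ)..T, (inner ℂ (g t) ((ContinuousLinearMap.adjoint B) (u (T - t))) : ℂ) =
      ∫ t in (0 : ℝ)..T, (inner ℂ ((ContinuousLinearMap.adjoint B) (v t)) (f (T - t)) : ℂ) := by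
  simp only [adjoint_inner_left, adjoint_inner_right]
  exact integral_inner_reflect_eq_of_forward_adjoint A hT.le (B.continuous.comp hf)
    (B.continuous.comp hg) hu hv hueq hu0 hveq hv0
end

section
/- Let f, g : ℝ → Y be continuous with f(t) = 0 for t > T. Let u : ℝ → H be differentiable with i·u'(t) = A(u(t)) + B(f(t)) for t ∈ [0,2T] and u(0) = 0, and let v : ℝ → H be differentiable with i·v'(t) = −A*(v(t)) − B(g(t)) for t ∈ [0,T] and v(0) = 0. Then ⟨u(T), v(T)⟩_H = −i ∫₀ᵀ ⟨B*(u(2T−η)), g(η)⟩_Y dη. (This is the representation Cᵀ = −i (Zᵀ)* J²ᵀ R²ᵀ Zᵀ of the connecting operator Cᵀ, defined by ⟨Cᵀ f, g⟩ = ⟨u^f(T), v^g(T)⟩_H, in terms of the response operator R²ᵀ on the doubled time interval.) -/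
/-!
Put `F t = ⟪v t, u (2T - t)⟫`. Differentiating and inserting both equations, the terms in `A`
cancel by adjointness, leaving `F' t = i ⟪v t, B f(2T - t)⟫ - i ⟪B g t, u (2T - t)⟫`.
For `0 < t < T` we have `2T - t > T`, so the first term vanishes; since `v 0 = 0` gives
`F 0 = 0`, the fundamental theorem of calculus on `[0, T]` yields the formula for `F T`.
-/

open Set Complex
open scoped InnerProductSpace InnerProduct

theorem eq_neg_I_smul_of_I_smul_eq {M : Type*} [AddCommGroup M] [Module ℂ M] {x y : M}
    (h : I • x = y) : x = -I • y := by
  rw [← h, smul_smul, neg_mul, I_mul_I, neg_neg, one_smul]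

theorem hasDerivAt_inner_comp_const_sub {H : Type*} [NormedAddCommGroup H]
    [InnerProductSpace ℂ H] [CompleteSpace H] {A : H →L[ℂ] H} {u v : ℝ → H} {u' v' p q : H}
    {c t : ℝ} (hu : HasDerivAt u u' (c - t)) (hv : HasDerivAt v v' t)
    (hu' : I • u' = A (u (c - t)) + p) (hv' : I • v' = -((A†) (v t)) - q) :
    HasDerivAt (fun s ↦ ⟪v s, u (c - s)⟫_ℂ)
      (I * ⟪v t, p⟫_ℂ - I * ⟪q, u (c - t)⟫_ℂ) t := by
  have hu_refl : HasDerivAt (fun s ↦ u (c - s)) (-u') t := by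
    simpa [Function.comp_def] using hu.scomp t ((hasDerivAt_id t).const_sub c)
  refine (hv.inner ℂ hu_refl).congr_deriv ?_
  rw [eq_neg_I_smul_of_I_smul_eq hu', eq_neg_I_smul_of_I_smul_eq hv']
  simp only [inner_neg_right, inner_smul_left, inner_smul_right, inner_add_right,
    inner_sub_left, inner_neg_left, ContinuousLinearMap.adjoint_inner_left, map_neg, conj_I]
  ring

/-- The paper's inner product `⟨a, b⟩` (linear in the first argument) is `inner ℂ b a`. -/
theorem stmt_2_general {H Y : Type*}
    [NormedAddCommGroup H] [InnerProductSpace ℂ H] [CompleteSpace H]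
    [NormedAddCommGroup Y] [InnerProductSpace ℂ Y] [CompleteSpace Y]
    (A : H →L[ℂ] H) (B : Y →L[ℂ] H) (T : ℝ) (hT : 0 < T)
    (f g : ℝ → Y) (hg : Continuous g)
    (hfT : ∀ t : ℝ, T < t → f t = 0)
    (u v : ℝ → H) (hu : Differentiable ℝ u) (hv : Differentiable ℝ v)
    (hueq : ∀ t ∈ Set.Icc (0 : ℝ) (2 * T),
      Complex.I • deriv u t = A (u t) + B (f t))
    (hveq : ∀ t ∈ Set.Icc (0 : ℝ) T,
      Complex.I • deriv v t = -((ContinuousLinearMap.adjoint A) (v t)) - B (g t))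
    (hv0 : v 0 = 0) :
    (inner ℂ (v T) (u T) : ℂ) =
      -Complex.I *
        ∫ η in (0 : ℝ)..T,
          (inner ℂ (g η) ((ContinuousLinearMap.adjoint B) (u (2 * T - η))) : ℂ) := by
  have hderiv : ∀ t ∈ Ioo 0 T, HasDerivAt (fun s ↦ ⟪v s, u (2 * T - s)⟫_ℂ)
      (-I * ⟪g t, (B†) (u (2 * T - t))⟫_ℂ) t := by
    rintro t ⟨ht0, htT⟩
    have h := hasDerivAt_inner_comp_const_sub (c := 2 * T) (hu _).hasDerivAt (hv t).hasDerivAt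
      (hueq _ ⟨by linarith, by linarith⟩) (hveq t ⟨ht0.le, htT.le⟩)
    simpa [hfT _ (by linarith : T < 2 * T - t), ContinuousLinearMap.adjoint_inner_right,
      neg_mul] using h
  have hu_cont := hu.continuous
  have hv_cont := hv.continuous
  have hB_cont := (B†).continuous
  have hcont : Continuous fun s ↦ ⟪v s, u (2 * T - s)⟫_ℂ := by fun_prop
  have hderiv_cont : Continuous fun t ↦ -I * ⟪g t, (B†) (u (2 * T - t))⟫_ℂ := by fun_prop
  have hftc := intervalIntegral.integral_eq_sub_of_hasDerivAt_of_le hT.le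
    hcont.continuousOn hderiv (hderiv_cont.intervalIntegrable 0 T)
  rw [intervalIntegral.integral_const_mul] at hftc
  simpa [hv0, two_mul] using hftc.symm

/-- the representation `Cᵀ = −i (Zᵀ)* J²ᵀ R²ᵀ Zᵀ` of the connecting operator,
`⟨u^f(T), v^g(T)⟩_H = −i ∫₀ᵀ ⟨B*(u(2T−η)), g(η)⟩_Y dη`.
The paper's inner product `⟨a, b⟩` (linear in the first argument) is rendered as
Mathlib's `inner b a`. -/
theorem stmt_2 {H Y : Type*}
    [NormedAddCommGroup H] [InnerProductSpace ℂ H] [CompleteSpace H]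
    [NormedAddCommGroup Y] [InnerProductSpace ℂ Y] [CompleteSpace Y]
    (A : H →L[ℂ] H) (B : Y →L[ℂ] H) (T : ℝ) (hT : 0 < T)
    (f g : ℝ → Y) (hf : Continuous f) (hg : Continuous g)
    (hfT : ∀ t : ℝ, T < t → f t = 0)
    (u v : ℝ → H) (hu : Differentiable ℝ u) (hv : Differentiable ℝ v)
    (hueq : ∀ t ∈ Set.Icc (0 : ℝ) (2 * T),
      Complex.I • deriv u t = A (u t) + B (f t))
    (hu0 : u 0 = 0)
    (hveq : ∀ t ∈ Set.Icc (0 : ℝ) T,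
      Complex.I • deriv v t = -((ContinuousLinearMap.adjoint A) (v t)) - B (g t))
    (hv0 : v 0 = 0) :
    (inner ℂ (v T) (u T) : ℂ) =
      -Complex.I *
        ∫ η in (0 : ℝ)..T,
          (inner ℂ (g η) ((ContinuousLinearMap.adjoint B) (u (2 * T - η))) : ℂ) :=
  stmt_2_general A B T hT f g hg hfT u v hu hv hueq hveq hv0
end

section
/- Let f : ℝ → Y be continuously differentiable with f(0) = 0. Let u : ℝ → H be differentiable with i·u'(t) = A(u(t)) + B(f(t)) for all t and u(0) = 0, and let w : ℝ → H be differentiable with i·w'(t) = A(w(t)) + B(f'(t)) for all t and w(0) = 0. Then w(t) = u'(t) for all t ≥ 0. (In control-theoretic notation: u^{df/dt} = (d/dt) u^{f} whenever f(0) = 0.) -/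
/-!
Differentiating `i u' = A u + B f` in `t` shows that `u'` solves the same equation with forcing
`f'`. At `t = 0` it equals `-i (A u(0) + B f(0)) = 0 = w(0)`, and solutions of this equation are
determined by their value at one time, its right-hand side being Lipschitz in the state.
-/

open Complex

section

variable {H : Type*} [NormedAddCommGroup H] [NormedSpace ℂ H]

/-- `x` solves `i x' = A x + g`. -/
def IsSchrodingerSolution (A : H →L[ℂ] H) (g x : ℝ → H) : Prop :=
  ∀ t, HasDerivAt x (I⁻¹ • (A (x t) + g t)) t

namespace IsSchrodingerSolution

variable {A : H →L[ℂ] H} {g x y : ℝ → H}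

theorem of_I_smul_deriv (hx : Differentiable ℝ x) (heq : ∀ t, I • deriv x t = A (x t) + g t) :
    IsSchrodingerSolution A g x := fun t ↦ by
  simpa only [← heq t, inv_smul_smul₀ I_ne_zero] using (hx t).hasDerivAt

theorem deriv_eq (hx : IsSchrodingerSolution A g x) (t : ℝ) :
    deriv x t = I⁻¹ • (A (x t) + g t) :=
  (hx t).deriv

theorem eq_of_apply_eq (hx : IsSchrodingerSolution A g x) (hy : IsSchrodingerSolution A g y)
    {t₀ : ℝ} (h : x t₀ = y t₀) : x = y :=
  ODE_solution_unique_univ (v := fun t z ↦ I⁻¹ • (A z + g t)) (s := fun _ ↦ Set.univ)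
    (fun t ↦ ((lipschitzWith_smul I⁻¹).comp (A.lipschitz.add (.const (g t)))).lipschitzOnWith)
    (fun t ↦ ⟨hx t, trivial⟩) (fun t ↦ ⟨hy t, trivial⟩) h

theorem deriv {g' : ℝ → H} (hx : IsSchrodingerSolution A g x) (hg : ∀ t, HasDerivAt g (g' t) t) :
    IsSchrodingerSolution A g' (_root_.deriv x) := fun t ↦ by
  rw [show _root_.deriv x = fun s ↦ I⁻¹ • (A (x s) + g s) from funext hx.deriv_eq]
  exact ((A.restrictScalars ℝ).hasFDerivAt.comp_hasDerivAt t (hx t)).add (hg t) |>.const_smul I⁻¹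

end IsSchrodingerSolution

end

/-- `u^{df/dt} = (d/dt) u^{f}` whenever `f(0) = 0`. -/
theorem stmt_3 {H Y : Type*}
    [NormedAddCommGroup H] [NormedSpace ℂ H]
    [NormedAddCommGroup Y] [NormedSpace ℂ Y]
    (A : H →L[ℂ] H) (B : Y →L[ℂ] H)
    (f : ℝ → Y) (hf : ContDiff ℝ 1 f) (hf0 : f 0 = 0)
    (u w : ℝ → H) (hu : Differentiable ℝ u) (hw : Differentiable ℝ w)
    (hueq : ∀ t : ℝ, Complex.I • deriv u t = A (u t) + B (f t))
    (hu0 : u 0 = 0)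
    (hweq : ∀ t : ℝ, Complex.I • deriv w t = A (w t) + B (deriv f t))
    (hw0 : w 0 = 0) :
    ∀ t : ℝ, 0 ≤ t → w t = deriv u t := by
  intro t _
  have hBf (s : ℝ) : HasDerivAt (fun s ↦ B (f s)) (B (deriv f s)) s :=
    (B.restrictScalars ℝ).hasFDerivAt.comp_hasDerivAt s
      ((hf.differentiable one_ne_zero s).hasDerivAt)
  have hu' := IsSchrodingerSolution.of_I_smul_deriv (g := fun s ↦ B (f s)) hu hueq
  have hw' := IsSchrodingerSolution.of_I_smul_deriv (g := fun s ↦ B (deriv f s)) hw hweq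
  refine congrFun (hw'.eq_of_apply_eq (hu'.deriv hBf) (t₀ := 0) ?_) t
  rw [hw0, hu'.deriv_eq, hu0, hf0, map_zero, map_zero, add_zero, smul_zero]
end

section
/- Let f : ℝ → Y be continuously differentiable with f(0) = 0 and f(T) = 0. Let u : ℝ → H be differentiable with i·u'(t) = A(u(t)) + B(f(t)) for all t and u(0) = 0, and let w : ℝ → H be differentiable with i·w'(t) = A(w(t)) + B(f'(t)) for all t and w(0) = 0. Assume that u(T) is an eigenvector of A: A(u(T)) = λ·u(T) for some λ ∈ ℂ. Then w(T) = −i·λ·u(T). (This is the forward part of the theorem stating that eigenvalues λ_k of A together with controls f_k steering the system to eigenvectors solve the generalized spectral problem Cᵀ ḟ_k + i λ_k Cᵀ f_k = 0.) -/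
/-!
Differentiating `i u' = A u + B f` in time shows that `u'` solves the equation driven by `f'`, and
`u'(0) = -i (A u(0) + B f(0)) = 0 = w(0)`. By uniqueness of solutions to this Lipschitz ODE,
`w = u'`, hence `w(T) = -i (A u(T) + B f(T)) = -i λ u(T)` because `f(T) = 0`.
-/

open Complex

section
variable {E : Type*} [NormedAddCommGroup E] [NormedSpace ℂ E]

theorem hasDerivAt_of_I_smul_deriv_eq {u : ℝ → E} {t : ℝ} {y : E}
    (hu : DifferentiableAt ℝ u t) (h : I • deriv u t = y) : HasDerivAt u (-I • y) t := by
  rw [← h, smul_smul, neg_mul, I_mul_I, neg_neg, one_smul]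
  exact hu.hasDerivAt

theorem ContinuousLinearMap.hasDerivAt_comp_of_hasDerivAt {F : Type*} [NormedAddCommGroup F]
    [NormedSpace ℂ F] (B : F →L[ℂ] E) {f : ℝ → F} {f' : F} {t : ℝ} (hf : HasDerivAt f f' t) :
    HasDerivAt (fun s => B (f s)) (B f') t :=
  (B.restrictScalars ℝ).hasFDerivAt.comp_hasDerivAt t hf

theorem lipschitzWith_neg_I_smul_add (A : E →L[ℂ] E) (c : E) :
    LipschitzWith ‖A‖₊ fun x => -I • (A x + c) := by
  refine LipschitzWith.of_dist_le_mul fun x y => ?_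
  rw [dist_eq_norm, dist_eq_norm, ← smul_sub, add_sub_add_right_eq_sub, ← map_sub, norm_smul,
    norm_neg, norm_I, one_mul]
  exact A.le_opNorm _

variable (A : E →L[ℂ] E) {g u w : ℝ → E}

theorem eq_of_hasDerivAt_neg_I_smul_add {t₀ : ℝ}
    (hu : ∀ t, HasDerivAt u (-I • (A (u t) + g t)) t)
    (hw : ∀ t, HasDerivAt w (-I • (A (w t) + g t)) t) (h₀ : u t₀ = w t₀) : u = w :=
  ODE_solution_unique_univ (s := fun _ => Set.univ)
    (fun t => (lipschitzWith_neg_I_smul_add A (g t)).lipschitzOnWith)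
    (fun t => ⟨hu t, trivial⟩) (fun t => ⟨hw t, trivial⟩) h₀

theorem hasDerivAt_deriv_of_hasDerivAt_neg_I_smul_add {g' : ℝ → E}
    (hg : ∀ t, HasDerivAt g (g' t) t) (hu : ∀ t, HasDerivAt u (-I • (A (u t) + g t)) t) (t : ℝ) :
    HasDerivAt (deriv u) (-I • (A (deriv u t) + g' t)) t := by
  have hderiv : deriv u = fun s => -I • (A (u s) + g s) := funext fun s => (hu s).deriv
  rw [hderiv]
  exact ((A.hasDerivAt_comp_of_hasDerivAt (hu t)).add (hg t)).const_smul (-I)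

end

theorem stmt_4_general {H Y : Type*}
    [NormedAddCommGroup H] [NormedSpace ℂ H]
    [NormedAddCommGroup Y] [NormedSpace ℂ Y]
    (A : H →L[ℂ] H) (B : Y →L[ℂ] H) (T : ℝ)
    (f : ℝ → Y) (hf : ContDiff ℝ 1 f) (hf0 : f 0 = 0) (hfT : f T = 0)
    (u w : ℝ → H) (hu : Differentiable ℝ u) (hw : Differentiable ℝ w)
    (hueq : ∀ t : ℝ, Complex.I • deriv u t = A (u t) + B (f t))
    (hu0 : u 0 = 0)
    (hweq : ∀ t : ℝ, Complex.I • deriv w t = A (w t) + B (deriv f t))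
    (hw0 : w 0 = 0)
    (lam : ℂ) (heig : A (u T) = lam • u T) :
    w T = (-Complex.I * lam) • u T := by
  have hBf (t : ℝ) : HasDerivAt (fun s => B (f s)) (B (deriv f t)) t :=
    B.hasDerivAt_comp_of_hasDerivAt ((hf.differentiable one_ne_zero) t).hasDerivAt
  have hu' (t : ℝ) := hasDerivAt_of_I_smul_deriv_eq (hu t) (hueq t)
  have hw' (t : ℝ) := hasDerivAt_of_I_smul_deriv_eq (hw t) (hweq t)
  have hwu : w = deriv u :=
    eq_of_hasDerivAt_neg_I_smul_add A (t₀ := 0) hw'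
      (hasDerivAt_deriv_of_hasDerivAt_neg_I_smul_add A hBf hu')
      (by rw [hw0, (hu' 0).deriv, hu0, hf0, map_zero, map_zero, add_zero, smul_zero])
  rw [hwu, (hu' T).deriv, hfT, heig, map_zero, add_zero, smul_smul]

/-- forward part of Theorem 3.1: if the control `f` (with `f(0) = f(T) = 0`)
steers the system to an eigenvector `u(T)` of `A` with eigenvalue `λ`, then the solution `w`
driven by `f'` satisfies `w(T) = −i·λ·u(T)` (the generalized spectral problem
`Cᵀ ḟ_k + i λ_k Cᵀ f_k = 0`). -/
theorem stmt_4 {H Y : Type*}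
    [NormedAddCommGroup H] [NormedSpace ℂ H]
    [NormedAddCommGroup Y] [NormedSpace ℂ Y]
    (A : H →L[ℂ] H) (B : Y →L[ℂ] H) (T : ℝ) (hT : 0 < T)
    (f : ℝ → Y) (hf : ContDiff ℝ 1 f) (hf0 : f 0 = 0) (hfT : f T = 0)
    (u w : ℝ → H) (hu : Differentiable ℝ u) (hw : Differentiable ℝ w)
    (hueq : ∀ t : ℝ, Complex.I • deriv u t = A (u t) + B (f t))
    (hu0 : u 0 = 0)
    (hweq : ∀ t : ℝ, Complex.I • deriv w t = A (w t) + B (deriv f t))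
    (hw0 : w 0 = 0)
    (lam : ℂ) (heig : A (u T) = lam • u T) :
    w T = (-Complex.I * lam) • u T :=
  stmt_4_general A B T f hf hf0 hfT u w hu hw hueq hu0 hweq hw0 lam heig
end

section
/- Let g : ℝ → Y be continuously differentiable with g(0) = 0 and g(T) = 0. Let v : ℝ → H be differentiable with i·v'(t) = −A*(v(t)) − B(g(t)) for all t and v(0) = 0, and let w : ℝ → H be differentiable with i·w'(t) = −A*(w(t)) − B(g'(t)) for all t and w(0) = 0. Assume A*(v(T)) = μ·v(T) for some μ ∈ ℂ. Then w(T) = i·μ·v(T). (This shows the spectrum of A* and the controls g_k solve the adjoint generalized spectral problem (Cᵀ)* ġ_k − i·conj(λ_k)·(Cᵀ)* g_k = 0.) -/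
/-!
Differentiating the equation `v' = i (A* v + B g)` shows that `v'` solves the same linear
equation as `w`, now driven by `g'`, and `v'(0) = i (A* v(0) + B g(0)) = 0 = w(0)`. Solutions of a
linear equation with Lipschitz right-hand side are determined by their initial value, so `w = v'`,
and at time `T` the eigenvector relation together with `g(T) = 0` gives
`w(T) = v'(T) = i A* v(T) = i μ v(T)`.
-/

open Complex Set

theorem eq_I_smul_add_I_smul_of_I_smul_eq_neg_sub {M : Type*} [AddCommGroup M] [Module ℂ M]
    {y a b : M} (h : I • y = -a - b) : y = I • a + I • b := by
  have h' := congrArg (I • ·) h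
  simp only [smul_smul, I_mul_I, neg_one_smul, smul_sub, smul_neg] at h'
  rw [← neg_neg y, h']
  abel

section LinearODE

variable {E : Type*} [NormedAddCommGroup E] [NormedSpace ℝ E] (L : E →L[ℝ] E) {f x y : ℝ → E}

theorem eq_of_hasDerivAt_clm_add (hx : ∀ t, HasDerivAt x (L (x t) + f t) t)
    (hy : ∀ t, HasDerivAt y (L (y t) + f t) t) {t₀ : ℝ} (h : x t₀ = y t₀) : x = y :=
  ODE_solution_unique_univ (v := fun t z ↦ L z + f t) (s := fun _ ↦ univ)
    (fun t ↦ (L.lipschitz.add (LipschitzWith.const (f t))).lipschitzOnWith)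
    (fun t ↦ ⟨hx t, mem_univ _⟩) (fun t ↦ ⟨hy t, mem_univ _⟩) h

theorem hasDerivAt_deriv_of_hasDerivAt_clm_add {f' : ℝ → E} (hf : ∀ t, HasDerivAt f (f' t) t)
    (hx : ∀ t, HasDerivAt x (L (x t) + f t) t) (t : ℝ) :
    HasDerivAt (deriv x) (L (deriv x t) + f' t) t := by
  have hderiv : deriv x = fun t ↦ L (x t) + f t := funext fun t ↦ (hx t).deriv
  rw [hderiv]
  exact (L.hasFDerivAt.comp_hasDerivAt t (hx t)).add (hf t)

end LinearODE

theorem stmt_6_general {H Y : Type*}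
    [NormedAddCommGroup H] [InnerProductSpace ℂ H] [CompleteSpace H]
    [NormedAddCommGroup Y] [InnerProductSpace ℂ Y]
    (A : H →L[ℂ] H) (B : Y →L[ℂ] H) (T : ℝ)
    (g : ℝ → Y) (hg : ContDiff ℝ 1 g) (hg0 : g 0 = 0) (hgT : g T = 0)
    (v w : ℝ → H) (hv : Differentiable ℝ v) (hw : Differentiable ℝ w)
    (hveq : ∀ t : ℝ,
      Complex.I • deriv v t = -((ContinuousLinearMap.adjoint A) (v t)) - B (g t))
    (hv0 : v 0 = 0)
    (hweq : ∀ t : ℝ,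
      Complex.I • deriv w t = -((ContinuousLinearMap.adjoint A) (w t)) - B (deriv g t))
    (hw0 : w 0 = 0)
    (μ : ℂ) (heig : (ContinuousLinearMap.adjoint A) (v T) = μ • v T) :
    w T = (Complex.I * μ) • v T := by
  set L : H →L[ℝ] H := (I • ContinuousLinearMap.adjoint A).restrictScalars ℝ
  have hv' : ∀ t, HasDerivAt v (L (v t) + I • B (g t)) t := fun t ↦
    eq_I_smul_add_I_smul_of_I_smul_eq_neg_sub (hveq t) ▸ (hv t).hasDerivAt
  have hw' : ∀ t, HasDerivAt w (L (w t) + I • B (deriv g t)) t := fun t ↦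
    eq_I_smul_add_I_smul_of_I_smul_eq_neg_sub (hweq t) ▸ (hw t).hasDerivAt
  have hBg : ∀ t, HasDerivAt (fun t ↦ I • B (g t)) (I • B (deriv g t)) t := fun t ↦
    (((B.restrictScalars ℝ).hasFDerivAt.comp_hasDerivAt t
      ((hg.differentiable one_ne_zero) t).hasDerivAt)).const_smul I
  have hw_eq : w = deriv v :=
    eq_of_hasDerivAt_clm_add L hw' (hasDerivAt_deriv_of_hasDerivAt_clm_add L hBg hv') (t₀ := 0)
      (by simp [hw0, (hv' 0).deriv, hv0, hg0])
  rw [hw_eq, (hv' T).deriv, hgT]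
  simp [L, heig, smul_smul]

/-- the adjoint analogue of the generalized spectral problem:
if the control `g` (with `g(0) = g(T) = 0`) steers the adjoint system to an
eigenvector `v(T)` of `A*` with eigenvalue `μ`, then the solution `w` driven by `g'`
satisfies `w(T) = i·μ·v(T)` (the problem `(Cᵀ)* ġ_k − i·conj(λ_k)·(Cᵀ)* g_k = 0`). -/
theorem stmt_6 {H Y : Type*}
    [NormedAddCommGroup H] [InnerProductSpace ℂ H] [CompleteSpace H]
    [NormedAddCommGroup Y] [InnerProductSpace ℂ Y] [CompleteSpace Y]
    (A : H →L[ℂ] H) (B : Y →L[ℂ] H) (T : ℝ) (hT : 0 < T)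
    (g : ℝ → Y) (hg : ContDiff ℝ 1 g) (hg0 : g 0 = 0) (hgT : g T = 0)
    (v w : ℝ → H) (hv : Differentiable ℝ v) (hw : Differentiable ℝ w)
    (hveq : ∀ t : ℝ,
      Complex.I • deriv v t = -((ContinuousLinearMap.adjoint A) (v t)) - B (g t))
    (hv0 : v 0 = 0)
    (hweq : ∀ t : ℝ,
      Complex.I • deriv w t = -((ContinuousLinearMap.adjoint A) (w t)) - B (deriv g t))
    (hw0 : w 0 = 0)
    (μ : ℂ) (heig : (ContinuousLinearMap.adjoint A) (v T) = μ • v T) :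
    w T = (Complex.I * μ) • v T :=
  stmt_6_general A B T g hg hg0 hgT v w hv hw hveq hv0 hweq hw0 μ heig
end

section
/- Let g : ℝ → Y be continuous, let v : ℝ → H be differentiable with i·v'(t) = −A*(v(t)) − B(g(t)) for t ∈ [0,T] and v(0) = 0, and let a ∈ H. Let w : ℝ → H be differentiable with i·w'(t) + A(w(t)) = 0 for t ∈ [0,T] and w(T) = a. Then ⟨v(T), a⟩_H = i ∫₀ᵀ ⟨g(t), B*(w(t))⟩_Y dt. (This is the identity (W_#ᵀ)* = −i·𝕆ᵀ relating the adjoint of the control operator W_#ᵀ g := v^g(T) to the observation operator (𝕆ᵀ a)(t) := B* w^a(t).) -/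
/-!
Pair the two solutions: `F t := ⟪w t, v t⟫`. Along the flow the contributions of `A` and of its
adjoint `A†` cancel, so `F' t = i ⟪B† (w t), g t⟫`. Integrating over `[0, T]` and using
`v 0 = 0`, `w T = a` gives the identity.
-/

open ContinuousLinearMap

section

variable {H Y : Type*}
  [NormedAddCommGroup H] [InnerProductSpace ℂ H] [CompleteSpace H]
  [NormedAddCommGroup Y] [InnerProductSpace ℂ Y] [CompleteSpace Y]

lemma hasDerivAt_inner_of_control_eq (A : H →L[ℂ] H) (B : Y →L[ℂ] H) {v w : ℝ → H}
    {v' w' : H} {y : Y} {t : ℝ} (hv : HasDerivAt v v' t) (hw : HasDerivAt w w' t)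
    (hveq : Complex.I • v' = -(adjoint A) (v t) - B y) (hweq : Complex.I • w' + A (w t) = 0) :
    HasDerivAt (fun s => inner ℂ (w s) (v s)) (Complex.I * inner ℂ ((adjoint B) (w t)) y) t := by
  have hv' : v' = (-Complex.I) • (-(adjoint A) (v t) - B y) := by
    rw [← hveq, smul_smul]; simp
  have hw' : w' = (-Complex.I) • (-A (w t)) := by
    rw [← eq_neg_of_add_eq_zero_left hweq, smul_smul]; simp
  refine (hw.inner ℂ hv).congr_deriv ?_
  rw [hv', hw']
  simp only [inner_smul_left, inner_smul_right, inner_sub_right, inner_neg_left, inner_neg_right,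
    adjoint_inner_left, adjoint_inner_right, map_neg, Complex.conj_I, neg_neg]
  ring

lemma inner_sub_inner_eq_integral_of_control_eq (A : H →L[ℂ] H) (B : Y →L[ℂ] H) {T : ℝ}
    (hT : 0 ≤ T) {g : ℝ → Y} (hg : Continuous g) {v w : ℝ → H}
    (hv : Differentiable ℝ v) (hw : Differentiable ℝ w)
    (hveq : ∀ t ∈ Set.Icc (0 : ℝ) T, Complex.I • deriv v t = -(adjoint A) (v t) - B (g t))
    (hweq : ∀ t ∈ Set.Icc (0 : ℝ) T, Complex.I • deriv w t + A (w t) = 0) :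
    inner ℂ (w T) (v T) - inner ℂ (w 0) (v 0) =
      Complex.I * ∫ t in (0 : ℝ)..T, inner ℂ ((adjoint B) (w t)) (g t) := by
  have hderiv : ∀ t ∈ Set.uIcc (0 : ℝ) T, HasDerivAt (fun s => inner ℂ (w s) (v s))
      (Complex.I * inner ℂ ((adjoint B) (w t)) (g t)) t := by
    intro t ht
    rw [Set.uIcc_of_le hT] at ht
    exact hasDerivAt_inner_of_control_eq A B (hv t).hasDerivAt (hw t).hasDerivAt
      (hveq t ht) (hweq t ht)
  have hcont : Continuous fun t => Complex.I * inner ℂ ((adjoint B) (w t)) (g t) :=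
    continuous_const.mul (((adjoint B).continuous.comp hw.continuous).inner hg)
  rw [← intervalIntegral.integral_const_mul,
    intervalIntegral.integral_eq_sub_of_hasDerivAt hderiv (hcont.intervalIntegrable 0 T)]

end

/-- the identity `(W_#ᵀ)* = −i·𝕆ᵀ`:
`⟨v(T), a⟩_H = i ∫₀ᵀ ⟨g(t), B*(w(t))⟩_Y dt`, where `v` solves the adjoint control
system and `w` solves `i w_t + A w = 0`, `w(T) = a`.  The paper's inner product
`⟨a, b⟩` (linear in the first argument) is rendered as Mathlib's `inner b a`. -/
theorem stmt_7 {H Y : Type*}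
    [NormedAddCommGroup H] [InnerProductSpace ℂ H] [CompleteSpace H]
    [NormedAddCommGroup Y] [InnerProductSpace ℂ Y] [CompleteSpace Y]
    (A : H →L[ℂ] H) (B : Y →L[ℂ] H) (T : ℝ) (hT : 0 < T)
    (g : ℝ → Y) (hg : Continuous g)
    (v : ℝ → H) (hv : Differentiable ℝ v)
    (hveq : ∀ t ∈ Set.Icc (0 : ℝ) T,
      Complex.I • deriv v t = -((ContinuousLinearMap.adjoint A) (v t)) - B (g t))
    (hv0 : v 0 = 0)
    (a : H) (w : ℝ → H) (hw : Differentiable ℝ w)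
    (hweq : ∀ t ∈ Set.Icc (0 : ℝ) T, Complex.I • deriv w t + A (w t) = 0)
    (hwT : w T = a) :
    (inner ℂ a (v T) : ℂ) =
      Complex.I *
        ∫ t in (0 : ℝ)..T, (inner ℂ ((ContinuousLinearMap.adjoint B) (w t)) (g t) : ℂ) := by
  have h := inner_sub_inner_eq_integral_of_control_eq A B hT.le hg hv hw hveq hweq
  rwa [hwT, hv0, inner_zero_right, sub_zero] at h
end

section
/- Let φ ∈ H and λ ∈ ℂ satisfy A(φ) = λ·φ. Let g : ℝ → Y be continuous and let v : ℝ → H be differentiable with i·v'(t) = −A*(v(t)) − B(g(t)) for t ∈ [0,T] and v(0) = 0. Then ⟨φ, v(T)⟩_H = −i ∫₀ᵀ ⟨exp(−i·λ·(T−t))·B*(φ), g(t)⟩_Y dt. (This is the formula −i·O φ_k = (Cᵀ f_k)(T) used to recover the trace O φ_k = B* φ_k of an eigenvector from the connecting operator and the normalized control.) -/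
/-!
Pairing the equation with the eigenvector `φ` and using `⟪A† v, φ⟫ = λ ⟪v, φ⟫`, the coefficient
`w t = ⟪v t, φ⟫` solves the scalar linear equation `w' = -i λ w - i ⟪g, B† φ⟫` with `w 0 = 0`;
variation of constants then gives `w T` as the stated integral.
-/

open Complex ContinuousLinearMap

theorem hasDerivAt_cexp_mul_ofReal (c : ℂ) (t : ℝ) :
    HasDerivAt (fun s : ℝ => exp (c * s)) (exp (c * t) * c) t := by
  simpa using ((hasDerivAt_id t).ofReal_comp.const_mul c).cexp

theorem eq_cexp_smul_add_integral_of_hasDerivAt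
    {E : Type*} [NormedAddCommGroup E] [NormedSpace ℂ E] [CompleteSpace E]
    {f h : ℝ → E} {c : ℂ} {a b : ℝ}
    (hf : ∀ t ∈ Set.uIcc a b, HasDerivAt f (c • f t + h t) t)
    (hh : ContinuousOn h (Set.uIcc a b)) :
    f b = exp (c * ((b - a : ℝ) : ℂ)) • f a +
      ∫ t in a..b, exp (c * ((b - t : ℝ) : ℂ)) • h t := by
  have hu : ∀ t ∈ Set.uIcc a b,
      HasDerivAt (fun s : ℝ => exp (-c * s) • f s) (exp (-c * t) • h t) t := by
    intro t ht
    refine ((hasDerivAt_cexp_mul_ofReal (-c) t).smul (hf t ht)).congr_deriv ?_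
    rw [smul_add, smul_smul, add_right_comm, ← add_smul, mul_neg, add_neg_cancel, zero_smul,
      zero_add]
  have hint : ContinuousOn (fun t : ℝ => exp (-c * t) • h t) (Set.uIcc a b) :=
    ((continuous_ofReal.const_mul (-c)).cexp.continuousOn).smul hh
  have hFTC := intervalIntegral.integral_eq_sub_of_hasDerivAt hu hint.intervalIntegrable
  have hexp : ∀ s : ℝ, exp (c * ((b - s : ℝ) : ℂ)) = exp (c * b) * exp (-c * s) := by
    intro s
    rw [← exp_add]; push_cast; ring_nf
  simp_rw [hexp, mul_smul, intervalIntegral.integral_smul, hFTC, smul_sub, smul_smul,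
    ← exp_add]
  simp

theorem hasDerivAt_inner_eigenvector_of_adjoint_system {H Y : Type*}
    [NormedAddCommGroup H] [InnerProductSpace ℂ H] [CompleteSpace H]
    [NormedAddCommGroup Y] [InnerProductSpace ℂ Y] [CompleteSpace Y] {A : H →L[ℂ] H} {B : Y →L[ℂ] H}
    {φ : H} {lam : ℂ} (heig : A φ = lam • φ) {v : ℝ → H} {v' : H} {y : Y} {t : ℝ}
    (hv : HasDerivAt v v' t) (hveq : I • v' = -(adjoint A (v t)) - B y) :
    HasDerivAt (fun s => inner ℂ (v s) φ)
      ((-I * lam) • inner ℂ (v t) φ + -I * inner ℂ y (adjoint B φ)) t := by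
  have hv' : v' = -I • (-(adjoint A (v t)) - B y) := by
    rw [← hveq, smul_smul]; simp
  refine (hv.inner ℂ (hasDerivAt_const t φ)).congr_deriv ?_
  rw [hv', inner_zero_right, zero_add, inner_smul_left, inner_sub_left, inner_neg_left,
    adjoint_inner_left, heig, inner_smul_right, adjoint_inner_right]
  simp only [map_neg, conj_I, neg_neg, smul_eq_mul]
  ring

/-- the trace-recovery formula `−i·O φ_k = (Cᵀ f_k)(T)`:
if `A φ = λ φ` and `v` solves the adjoint control system with control `g`, then
`⟨φ, v(T)⟩_H = −i ∫₀ᵀ ⟨exp(−i λ (T−t)) B* φ, g(t)⟩_Y dt`.  The paper's inner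
product `⟨a, b⟩` (linear in the first argument) is rendered as Mathlib's `inner b a`. -/
theorem stmt_8 {H Y : Type*}
    [NormedAddCommGroup H] [InnerProductSpace ℂ H] [CompleteSpace H]
    [NormedAddCommGroup Y] [InnerProductSpace ℂ Y] [CompleteSpace Y]
    (A : H →L[ℂ] H) (B : Y →L[ℂ] H) (T : ℝ) (hT : 0 < T)
    (φ : H) (lam : ℂ) (heig : A φ = lam • φ)
    (g : ℝ → Y) (hg : Continuous g)
    (v : ℝ → H) (hv : Differentiable ℝ v)
    (hveq : ∀ t ∈ Set.Icc (0 : ℝ) T,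
      Complex.I • deriv v t = -((ContinuousLinearMap.adjoint A) (v t)) - B (g t))
    (hv0 : v 0 = 0) :
    (inner ℂ (v T) φ : ℂ) =
      -Complex.I *
        ∫ t in (0 : ℝ)..T,
          (inner ℂ (g t)
            (Complex.exp (-Complex.I * lam * ((T - t : ℝ) : ℂ)) •
              (ContinuousLinearMap.adjoint B) φ) : ℂ) := by
  have hderiv : ∀ t ∈ Set.uIcc 0 T, HasDerivAt (fun s => inner ℂ (v s) φ)
      ((-I * lam) • inner ℂ (v t) φ + -I * inner ℂ (g t) (adjoint B φ)) t := by
    intro t ht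
    rw [Set.uIcc_of_le hT.le] at ht
    exact hasDerivAt_inner_eigenvector_of_adjoint_system heig (hv t).hasDerivAt (hveq t ht)
  have hcont : ContinuousOn (fun t => -I * inner ℂ (g t) (adjoint B φ)) (Set.uIcc 0 T) :=
    (continuous_const.mul (hg.inner continuous_const)).continuousOn
  rw [eq_cexp_smul_add_integral_of_hasDerivAt hderiv hcont, hv0, inner_zero_left, smul_zero,
    zero_add, ← intervalIntegral.integral_const_mul]
  congr 1 with t
  rw [inner_smul_right, smul_eq_mul]
  ring
end

section
/- Let ψ ∈ H and μ ∈ ℂ satisfy A*(ψ) = μ·ψ. Let f : ℝ → Y be continuous and let u : ℝ → H be differentiable with i·u'(t) = A(u(t)) + B(f(t)) for t ∈ [0,T] and u(0) = 0. Then ⟨u(T), ψ⟩_H = −i ∫₀ᵀ ⟨f(t), exp(i·μ·(T−t))·B*(ψ)⟩_Y dt. (This is the formula i·O ψ_k = ((Cᵀ)* g_k)(T) used to recover the trace O ψ_k = B* ψ_k of an eigenvector of the adjoint operator.) -/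
/-!
Pairing the equation with the eigenvector `ψ` of `A*` turns it into the scalar equation
`φ' = -i μ̄ φ - i ⟨B* ψ, f⟩` for `φ t = ⟨ψ, u t⟩`. Variation of constants with `φ 0 = 0` gives
`φ T = -i ∫₀ᵀ exp (-i μ̄ (T - t)) ⟨B* ψ, f t⟩ dt`, and `exp (-i μ̄ (T - t))` is the conjugate of
`exp (i μ (T - t))`, which is the scalar pulled out of the first slot of the inner product.
-/

open Set Complex ComplexConjugate

theorem eq_exp_smul_add_integral_of_hasDerivAt {E : Type*} [NormedAddCommGroup E]
    [NormedSpace ℂ E] [CompleteSpace E] {φ g : ℝ → E} {a : ℂ} {s₀ s : ℝ}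
    (hφ : ∀ t ∈ uIcc s₀ s, HasDerivAt φ (a • φ t + g t) t) (hg : ContinuousOn g (uIcc s₀ s)) :
    φ s = exp (a * (s - s₀ : ℝ)) • φ s₀ + ∫ t in s₀..s, exp (a * (s - t : ℝ)) • g t := by
  have hexp : ∀ t : ℝ, HasDerivAt (fun t : ℝ => exp (-a * t)) (exp (-a * t) * -a) t := fun t => by
    simpa using ((hasDerivAt_id (t : ℂ)).const_mul (-a)).cexp.comp_ofReal
  have hw : ∀ t ∈ uIcc s₀ s,
      HasDerivAt (fun t : ℝ => exp (-a * t) • φ t) (exp (-a * t) • g t) t := fun t ht =>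
    ((hexp t).smul (hφ t ht)).congr_deriv (by module)
  have hint : IntervalIntegrable (fun t : ℝ => exp (-a * t) • g t) MeasureTheory.volume s₀ s :=
    ((by fun_prop : Continuous fun t : ℝ => exp (-a * t)).continuousOn.smul hg).intervalIntegrable
  have hFTC := intervalIntegral.integral_eq_sub_of_hasDerivAt hw hint
  have hsplit : ∀ t : ℝ, exp (a * (s - t : ℝ)) • g t = exp (a * s) • exp (-a * t) • g t := fun t => by
    rw [smul_smul, ← exp_add]; push_cast; ring_nf
  rw [intervalIntegral.integral_congr fun t _ => hsplit t, intervalIntegral.integral_smul, hFTC]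
  rw [smul_sub, smul_smul, smul_smul, ← exp_add, ← exp_add]
  push_cast; ring_nf; simp

theorem inner_apply_of_adjoint_apply_eq_smul {𝕜 E : Type*} [RCLike 𝕜] [NormedAddCommGroup E]
    [InnerProductSpace 𝕜 E] [CompleteSpace E] {A : E →L[𝕜] E} {ψ : E} {μ : 𝕜}
    (h : A.adjoint ψ = μ • ψ) (x : E) : inner 𝕜 ψ (A x) = conj μ * inner 𝕜 ψ x := by
  rw [← ContinuousLinearMap.adjoint_inner_left, h, inner_smul_left]

/-- the trace-recovery formula `i·O ψ_k = ((Cᵀ)* g_k)(T)`: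
if `A* ψ = μ ψ` and `u` solves the forward control system with control `f`, then
`⟨u(T), ψ⟩_H = −i ∫₀ᵀ ⟨f(t), exp(i μ (T−t)) B* ψ⟩_Y dt`.  The paper's inner
product `⟨a, b⟩` (linear in the first argument) is rendered as Mathlib's `inner b a`. -/
theorem stmt_9 {H Y : Type*}
    [NormedAddCommGroup H] [InnerProductSpace ℂ H] [CompleteSpace H]
    [NormedAddCommGroup Y] [InnerProductSpace ℂ Y] [CompleteSpace Y]
    (A : H →L[ℂ] H) (B : Y →L[ℂ] H) (T : ℝ) (hT : 0 < T)
    (ψ : H) (μ : ℂ) (heig : (ContinuousLinearMap.adjoint A) ψ = μ • ψ)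
    (f : ℝ → Y) (hf : Continuous f)
    (u : ℝ → H) (hu : Differentiable ℝ u)
    (hueq : ∀ t ∈ Set.Icc (0 : ℝ) T,
      Complex.I • deriv u t = A (u t) + B (f t))
    (hu0 : u 0 = 0) :
    (inner ℂ ψ (u T) : ℂ) =
      -Complex.I *
        ∫ t in (0 : ℝ)..T,
          (inner ℂ
            (Complex.exp (Complex.I * μ * ((T - t : ℝ) : ℂ)) •
              (ContinuousLinearMap.adjoint B) ψ)
            (f t) : ℂ) := by
  set Bψ := B.adjoint ψ
  have hode : ∀ t ∈ uIcc 0 T, HasDerivAt (fun t => inner ℂ ψ (u t))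
      ((-I * conj μ) • inner ℂ ψ (u t) + -I * inner ℂ Bψ (f t)) t := by
    intro t ht
    refine ((hasDerivAt_const t ψ).inner ℂ (hu t).hasDerivAt).congr_deriv ?_
    have heq := congrArg (inner ℂ ψ) (hueq t (uIcc_of_le hT.le ▸ ht))
    rw [inner_smul_right, inner_add_right, inner_apply_of_adjoint_apply_eq_smul heig,
      ← ContinuousLinearMap.adjoint_inner_left B] at heq
    rw [inner_zero_left, add_zero, smul_eq_mul]
    linear_combination (-I) * heq + inner ℂ ψ (deriv u t) * I_sq
  have hg : Continuous fun t => -I * inner ℂ Bψ (f t) := by fun_prop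
  rw [eq_exp_smul_add_integral_of_hasDerivAt hode hg.continuousOn, hu0, inner_zero_right,
    smul_zero, zero_add, ← intervalIntegral.integral_const_mul]
  refine intervalIntegral.integral_congr fun t _ => ?_
  simp only [inner_smul_left, ← exp_conj, map_mul, conj_I, conj_ofReal, smul_eq_mul]
  ring_nf
end

section
/- Let g, g_next : ℝ → Y be continuously differentiable with g(0) = g(T) = 0. Let v, v_next, w : ℝ → H be differentiable with i·v'(t) = −A*(v(t)) − B(g(t)), v(0) = 0; i·v_next'(t) = −A*(v_next(t)) − B(g_next(t)), v_next(0) = 0; and i·w'(t) = −A*(w(t)) − B(g'(t)), w(0) = 0. Assume the adjoint Jordan chain relation A*(v(T)) = μ·v(T) + v_next(T) for some μ ∈ ℂ. Then w(T) = i·μ·v(T) + i·v_next(T). (This shows the controls steering the adjoint system to a Jordan chain of root vectors ψ_k^l of A* solve the adjoint generalized spectral problem (Cᵀ)* ġ_k^l − i·conj(λ_k)·(Cᵀ)* g_k^l = i (Cᵀ)* g_k^{l+1}.) -/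
/-!
Differentiating the equation for `v` shows that `v'` solves the equation for `w`, with the same
initial value `v'(0) = 0` because `v(0) = g(0) = 0`. Uniqueness for linear ODEs gives `w = v'`, and
at `t = T` the equation for `v` together with `g(T) = 0` and the Jordan chain relation yields
`w(T) = v'(T) = i A* v(T) = i μ v(T) + i v_next(T)`.
-/

section LinearODE

variable {E F : Type*} [NormedAddCommGroup E] [NormedSpace ℝ E]
  [NormedAddCommGroup F] [NormedSpace ℝ F]

theorem eq_of_hasDerivAt_linear {L : E →L[ℝ] E} {f : ℝ → E} {u w : ℝ → E} {t₀ : ℝ}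
    (hu : ∀ t, HasDerivAt u (L (u t) + f t) t) (hw : ∀ t, HasDerivAt w (L (w t) + f t) t)
    (h₀ : u t₀ = w t₀) : u = w :=
  ODE_solution_unique_univ (v := fun t x => L x + f t) (s := fun _ => Set.univ)
    (fun t => (L.lipschitz.add (LipschitzWith.const (f t))).lipschitzOnWith)
    (fun t => ⟨hu t, trivial⟩) (fun t => ⟨hw t, trivial⟩) h₀

theorem hasDerivAt_deriv_of_deriv_eq {L : E →L[ℝ] E} {K : F →L[ℝ] E} {u : ℝ → E} {g : ℝ → F}
    (hu : Differentiable ℝ u) (hg : Differentiable ℝ g)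
    (hode : ∀ t, deriv u t = L (u t) + K (g t)) (t : ℝ) :
    HasDerivAt (deriv u) (L (deriv u t) + K (deriv g t)) t := by
  convert (L.hasFDerivAt.comp_hasDerivAt t (hu t).hasDerivAt).add
    (K.hasFDerivAt.comp_hasDerivAt t (hg t).hasDerivAt) using 1
  exact funext hode

end LinearODE

theorem deriv_eq_of_I_smul_deriv_eq {H Y : Type*}
    [NormedAddCommGroup H] [NormedSpace ℂ H] [NormedAddCommGroup Y] [NormedSpace ℂ Y]
    {L : H →L[ℂ] H} {B : Y →L[ℂ] H} {u : ℝ → H} {c : ℝ → Y}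
    (hode : ∀ t, Complex.I • deriv u t = -(L (u t)) - B (c t)) (t : ℝ) :
    deriv u t = (Complex.I • L).restrictScalars ℝ (u t)
      + (Complex.I • B).restrictScalars ℝ (c t) := by
  apply smul_right_injective H Complex.I_ne_zero
  simp [hode t, smul_add, smul_smul, sub_eq_add_neg]

theorem stmt_11_general {H Y : Type*}
    [NormedAddCommGroup H] [InnerProductSpace ℂ H] [CompleteSpace H]
    [NormedAddCommGroup Y] [InnerProductSpace ℂ Y]
    (A : H →L[ℂ] H) (B : Y →L[ℂ] H) (T : ℝ)
    (g : ℝ → Y) (hg : ContDiff ℝ 1 g)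
    (hg0 : g 0 = 0) (hgT : g T = 0)
    (v v_next w : ℝ → H)
    (hv : Differentiable ℝ v)
    (hw : Differentiable ℝ w)
    (hveq : ∀ t : ℝ,
      Complex.I • deriv v t = -((ContinuousLinearMap.adjoint A) (v t)) - B (g t))
    (hv0 : v 0 = 0)
    (hweq : ∀ t : ℝ,
      Complex.I • deriv w t = -((ContinuousLinearMap.adjoint A) (w t)) - B (deriv g t))
    (hw0 : w 0 = 0)
    (μ : ℂ) (hchain : (ContinuousLinearMap.adjoint A) (v T) = μ • v T + v_next T) :
    w T = (Complex.I * μ) • v T + Complex.I • v_next T := by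
  have hv' := deriv_eq_of_I_smul_deriv_eq hveq
  have hw_eq : w = deriv v := by
    refine eq_of_hasDerivAt_linear (t₀ := 0) (fun t => ?_)
      (hasDerivAt_deriv_of_deriv_eq hv (hg.differentiable one_ne_zero) hv') ?_
    · rw [← deriv_eq_of_I_smul_deriv_eq hweq t]
      exact (hw t).hasDerivAt
    · rw [hw0, hv' 0, hv0, hg0]
      simp
  rw [hw_eq, hv' T, hgT, ContinuousLinearMap.coe_restrictScalars', smul_apply,
    hchain]
  simp [smul_add, smul_smul]

/-- adjoint Jordan-chain version of the generalized spectral problem: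
if `A*(v(T)) = μ·v(T) + v_next(T)` then `w(T) = i·μ·v(T) + i·v_next(T)`,
i.e. `(Cᵀ)* ġ_k^l − i·conj(λ_k)·(Cᵀ)* g_k^l = i (Cᵀ)* g_k^{l+1}`. -/
theorem stmt_11 {H Y : Type*}
    [NormedAddCommGroup H] [InnerProductSpace ℂ H] [CompleteSpace H]
    [NormedAddCommGroup Y] [InnerProductSpace ℂ Y] [CompleteSpace Y]
    (A : H →L[ℂ] H) (B : Y →L[ℂ] H) (T : ℝ) (hT : 0 < T)
    (g g_next : ℝ → Y) (hg : ContDiff ℝ 1 g) (hg_next : ContDiff ℝ 1 g_next)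
    (hg0 : g 0 = 0) (hgT : g T = 0)
    (v v_next w : ℝ → H)
    (hv : Differentiable ℝ v) (hv_next : Differentiable ℝ v_next)
    (hw : Differentiable ℝ w)
    (hveq : ∀ t : ℝ,
      Complex.I • deriv v t = -((ContinuousLinearMap.adjoint A) (v t)) - B (g t))
    (hv0 : v 0 = 0)
    (hv_nexteq : ∀ t : ℝ,
      Complex.I • deriv v_next t = -((ContinuousLinearMap.adjoint A) (v_next t)) - B (g_next t))
    (hv_next0 : v_next 0 = 0)
    (hweq : ∀ t : ℝ,
      Complex.I • deriv w t = -((ContinuousLinearMap.adjoint A) (w t)) - B (deriv g t))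
    (hw0 : w 0 = 0)
    (μ : ℂ) (hchain : (ContinuousLinearMap.adjoint A) (v T) = μ • v T + v_next T) :
    w T = (Complex.I * μ) • v T + Complex.I • v_next T :=
  stmt_11_general A B T g hg hg0 hgT v v_next w hv hw hveq hv0 hweq hw0 μ hchain
end

section
/- Let λ ∈ ℂ, let L ≥ 1, and let ψ₁,…,ψ_L ∈ H be a Jordan chain for A*: A*(ψ_L) = conj(λ)·ψ_L and A*(ψ_j) = conj(λ)·ψ_j + ψ_{j+1} for 1 ≤ j ≤ L−1. Let φ₁ ∈ H satisfy A(φ₁) = λ·φ₁ and ⟨φ₁, ψ₁⟩ ≠ 0, and set φ̂₁ := ⟨φ₁, ψ₁⟩⁻¹·φ₁. Suppose that for 2 ≤ l ≤ L, φ_l ∈ H satisfies A(φ_l) = λ·φ_l + φ̂_{l−1}, and define recursively φ̂_l := φ_l − ⟨φ_l, ψ₁⟩·φ̂₁. Then ⟨φ̂_l, ψ_j⟩ = δ_{lj} for all 1 ≤ l, j ≤ L, i.e. the constructed chain φ̂₁,…,φ̂_L is biorthogonal to ψ₁,…,ψ_L. (This justifies the normalization steps f̂_k^1 = f_k^1 /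 (Cᵀ f_k^1, g_k^1) and f̂_k^l = f_k^l − (Cᵀ f_k^l, g_k^1)·f̂_k^1 producing controls with (Cᵀ f̂_k^l, g_k^j) = δ_{lj}.) -/
/-!
Moving `A - λ` across the inner product turns it into `A† - conj λ`, which shifts the Jordan
chain `ψ`: `⟨(A - λ) φ̂_l, ψ_j⟩ = ⟨φ̂_l, ψ_{j+1}⟩`. Since `(A - λ) φ̂_l = φ̂_{l-1}` (and `0` for
`l = 1`), the Gram matrix `⟨φ̂_l, ψ_j⟩` is determined by its entries at `j = 1`, which the
normalization makes equal to `δ_{l1}`.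
-/

open ContinuousLinearMap

section JordanChain

variable {H : Type*} [NormedAddCommGroup H] [InnerProductSpace ℂ H] [CompleteSpace H]
  (A : H →L[ℂ] H) (lam : ℂ)

theorem inner_eq_of_adjoint_apply_eq {ψ ψ' : H}
    (h : adjoint A ψ = starRingEnd ℂ lam • ψ + ψ') (x : H) :
    inner ℂ ψ' x = inner ℂ ψ (A x) - lam * inner ℂ ψ x := by
  have hx : inner ℂ (adjoint A ψ) x = inner ℂ ψ (A x) := adjoint_inner_left A x ψ
  rw [h, inner_add_left, inner_smul_left, starRingEnd_self_apply] at hx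
  linear_combination hx

theorem inner_jordanChain_eq_ite {L : ℕ} (ψ φ : ℕ → H)
    (hψ : ∀ j, 1 ≤ j → j < L → adjoint A (ψ j) = starRingEnd ℂ lam • ψ j + ψ (j + 1))
    (hφ₁ : A (φ 1) = lam • φ 1)
    (hφ : ∀ l, 1 ≤ l → l < L → A (φ (l + 1)) = lam • φ (l + 1) + φ l)
    (hψ₁ : ∀ l, 1 ≤ l → l ≤ L → inner ℂ (ψ 1) (φ l) = if l = 1 then 1 else 0) :
    ∀ j, 1 ≤ j → j ≤ L → ∀ l, 1 ≤ l → l ≤ L → inner ℂ (ψ j) (φ l) = if l = j then 1 else 0 := by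
  intro j hj
  induction j, hj using Nat.le_induction with
  | base => exact fun _ ↦ hψ₁
  | succ j hj ih =>
    intro hjL l hl hlL
    rw [inner_eq_of_adjoint_apply_eq A lam (hψ j hj (by omega))]
    obtain rfl | ⟨l, hl', rfl⟩ : l = 1 ∨ ∃ l', 1 ≤ l' ∧ l = l' + 1 := by
      rcases l with _ | _ | l <;> simp_all
    · rw [hφ₁, inner_smul_right, sub_self, if_neg (by omega)]
    · rw [hφ l hl' (by omega), inner_add_right, inner_smul_right, add_sub_cancel_left,
        ih (by omega) l hl' (by omega)]
      simp only [add_left_inj]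

end JordanChain

/-- The paper's inner product `⟨a, b⟩`, linear in `a`, is `inner ℂ b a` here. -/
theorem stmt_14_general {H : Type*}
    [NormedAddCommGroup H] [InnerProductSpace ℂ H] [CompleteSpace H]
    (A : H →L[ℂ] H) (lam : ℂ) (L : ℕ)
    (ψ : ℕ → H)
    (hψ : ∀ j : ℕ, 1 ≤ j → j ≤ L - 1 →
      (ContinuousLinearMap.adjoint A) (ψ j) = (starRingEnd ℂ) lam • ψ j + ψ (j + 1))
    (φ φhat : ℕ → H)
    (hφ1 : A (φ 1) = lam • φ 1)
    (hne : (inner ℂ (ψ 1) (φ 1) : ℂ) ≠ 0)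
    (hφhat1 : φhat 1 = (inner ℂ (ψ 1) (φ 1) : ℂ)⁻¹ • φ 1)
    (hφ : ∀ l : ℕ, 2 ≤ l → l ≤ L → A (φ l) = lam • φ l + φhat (l - 1))
    (hφhat : ∀ l : ℕ, 2 ≤ l → l ≤ L →
      φhat l = φ l - (inner ℂ (ψ 1) (φ l) : ℂ) • φhat 1) :
    ∀ l j : ℕ, 1 ≤ l → l ≤ L → 1 ≤ j → j ≤ L →
      (inner ℂ (ψ j) (φhat l) : ℂ) = if l = j then 1 else 0 := by
  have hA₁ : A (φhat 1) = lam • φhat 1 := by rw [hφhat1, map_smul, hφ1, smul_comm]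
  have hA : ∀ l, 1 ≤ l → l < L → A (φhat (l + 1)) = lam • φhat (l + 1) + φhat l := by
    intro l hl hlL
    rw [hφhat (l + 1) (by omega) hlL, map_sub, hφ (l + 1) (by omega) hlL, map_smul, hA₁,
      Nat.add_sub_cancel]
    module
  have hψ₁φhat₁ : inner ℂ (ψ 1) (φhat 1) = 1 := by
    rw [hφhat1, inner_smul_right, inv_mul_cancel₀ hne]
  have hψ₁ : ∀ l, 1 ≤ l → l ≤ L → inner ℂ (ψ 1) (φhat l) = if l = 1 then 1 else 0 := by
    intro l hl hlL
    obtain rfl | hl2 := eq_or_lt_of_le hl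
    · simpa using hψ₁φhat₁
    · rw [hφhat l hl2 hlL, inner_sub_right, inner_smul_right, hψ₁φhat₁, mul_one, sub_self,
        if_neg hl2.ne']
  intro l j hl hlL hj hjL
  exact inner_jordanChain_eq_ite A lam ψ φhat (fun j hj hjL ↦ hψ j hj (by omega)) hA₁ hA hψ₁
    j hj hjL l hl hlL

/-- the normalization procedure of Section 5:
given a Jordan chain `ψ₁,…,ψ_L` of `A*`, an eigenvector `φ₁` of `A` with
`⟨φ₁, ψ₁⟩ ≠ 0`, `φ̂₁ := ⟨φ₁, ψ₁⟩⁻¹ • φ₁`, and chain members `φ_l` with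
`A φ_l = λ φ_l + φ̂_{l−1}` and `φ̂_l := φ_l − ⟨φ_l, ψ₁⟩ • φ̂₁` for `2 ≤ l ≤ L`,
the family `φ̂₁,…,φ̂_L` is biorthogonal to `ψ₁,…,ψ_L`: `⟨φ̂_l, ψ_j⟩ = δ_{lj}`.
The paper's inner product `⟨a, b⟩` (linear in the first argument) is rendered as
Mathlib's `inner b a`. -/
theorem stmt_14 {H : Type*}
    [NormedAddCommGroup H] [InnerProductSpace ℂ H] [CompleteSpace H]
    (A : H →L[ℂ] H) (lam : ℂ) (L : ℕ) (hL : 1 ≤ L)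
    (ψ : ℕ → H)
    (hψL : (ContinuousLinearMap.adjoint A) (ψ L) = (starRingEnd ℂ) lam • ψ L)
    (hψ : ∀ j : ℕ, 1 ≤ j → j ≤ L - 1 →
      (ContinuousLinearMap.adjoint A) (ψ j) = (starRingEnd ℂ) lam • ψ j + ψ (j + 1))
    (φ φhat : ℕ → H)
    (hφ1 : A (φ 1) = lam • φ 1)
    (hne : (inner ℂ (ψ 1) (φ 1) : ℂ) ≠ 0)
    (hφhat1 : φhat 1 = (inner ℂ (ψ 1) (φ 1) : ℂ)⁻¹ • φ 1)
    (hφ : ∀ l : ℕ, 2 ≤ l → l ≤ L → A (φ l) = lam • φ l + φhat (l - 1))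
    (hφhat : ∀ l : ℕ, 2 ≤ l → l ≤ L →
      φhat l = φ l - (inner ℂ (ψ 1) (φ l) : ℂ) • φhat 1) :
    ∀ l j : ℕ, 1 ≤ l → l ≤ L → 1 ≤ j → j ≤ L →
      (inner ℂ (ψ j) (φhat l) : ℂ) = if l = j then 1 else 0 :=
  stmt_14_general A lam L ψ hψ φ φhat hφ1 hne hφhat1 hφ hφhat
end

section
/- Let L : ℕ → ℕ with L(k) ≥ 1, and for each k ∈ ℕ and 1 ≤ l ≤ L(k) let φ_{k,l}, ψ_{k,l} ∈ H satisfy: A(φ_{k,1}) = λ_k·φ_{k,1} and A(φ_{k,l}) = λ_k·φ_{k,l} + φ_{k,l−1} for 2 ≤ l ≤ L(k); and the biorthogonality ⟨φ_{k,l}, ψ_{r,s}⟩ = 1 if (k,l) = (r,s) and 0 otherwise, where λ : ℕ → ℂ. Let a be a family of complex coefficients such that the series ∑_{k,l} a_{k,l}·φ_{k,l} converges in H to an element w. Let μ ∈ ℂ satisfy μ ≠ λ_k for every k. If ⟨A(w) − μ·w, ψ_{r,s}⟩ = 0 for every r and every 1 ≤ s ≤ L(r), then a_{k,l} = 0 for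 all k, l, and hence w = 0. (This is the converse direction of the generalized spectral problem in the case of non-simple spectrum: a solution (μ, f) of Cᵀ ḟ + i μ Cᵀ f = 0 with μ not an eigenvalue forces W^T f = 0.) -/
/-!
Pairing with `ψ r s` reads off coefficients, and `A - μ` acts on the chain `φ k ·` as
multiplication by `λ_k - μ` plus a shift down by one, so the hypothesis says
`(λ_r - μ) a_{r,s} + a_{r,s+1} = 0` along each chain. The multiplier is nonzero and the chain
ends at `L r`, so downward induction kills every coefficient.
-/

open scoped InnerProductSpace

theorem eq_zero_of_mul_add_succ_eq_zero {R : Type*} [Semiring R] [NoZeroDivisors R]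
    {α : R} {x : ℕ → R} {N : ℕ} (hα : α ≠ 0) (hrec : ∀ n, α * x n + x (n + 1) = 0)
    (hN : ∀ n, N ≤ n → x n = 0) (n : ℕ) : x n = 0 := by
  suffices ∀ d n, N ≤ n + d → x n = 0 from this (N - n) n (by omega)
  intro d
  induction d with
  | zero => exact hN
  | succ d ih =>
    intro n hn
    have h := hrec n
    rw [ih (n + 1) (by omega), add_zero] at h
    exact (mul_eq_zero.mp h).resolve_left hα

section JordanChain

variable {H : Type*} [NormedAddCommGroup H] [InnerProductSpace ℂ H]
  {A : H →L[ℂ] H} {L : ℕ → ℕ} {lam : ℕ → ℂ} {φ ψ : ℕ → ℕ → H}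

theorem inner_apply_sub_smul_jordanChain
    (hchain1 : ∀ k, A (φ k 1) = lam k • φ k 1)
    (hchain : ∀ k l, 2 ≤ l → l ≤ L k → A (φ k l) = lam k • φ k l + φ k (l - 1))
    (hbi : ∀ k l r s, 1 ≤ l → l ≤ L k → 1 ≤ s → s ≤ L r →
      ⟪ψ r s, φ k l⟫_ℂ = if (k, l) = (r, s) then 1 else 0)
    (μ : ℂ) {k l r s : ℕ} (hl : 1 ≤ l) (hlL : l ≤ L k) (hs : 1 ≤ s) (hsL : s ≤ L r) :
    ⟪ψ r s, A (φ k l) - μ • φ k l⟫_ℂ =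
      (if (k, l) = (r, s) then lam k - μ else 0) + if (k, l) = (r, s + 1) then 1 else 0 := by
  obtain rfl | hl2 : l = 1 ∨ 2 ≤ l := by omega
  · have hne : (k, 1) ≠ (r, s + 1) := by simp only [ne_eq, Prod.mk.injEq]; omega
    rw [hchain1, ← sub_smul, inner_smul_right, hbi k 1 r s hl hlL hs hsL, if_neg hne]
    split_ifs <;> simp
  · have hprev : (k, l - 1) = (r, s) ↔ (k, l) = (r, s + 1) := by
      simp only [Prod.mk.injEq]; omega
    rw [hchain k l hl2 hlL, add_sub_right_comm, ← sub_smul, inner_add_right, inner_smul_right,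
      hbi k l r s hl hlL hs hsL, hbi k (l - 1) r s (by omega) (by omega) hs hsL]
    simp only [hprev, mul_ite, mul_one, mul_zero]

theorem inner_apply_sub_smul_of_hasSum_jordanChain
    (hchain1 : ∀ k, A (φ k 1) = lam k • φ k 1)
    (hchain : ∀ k l, 2 ≤ l → l ≤ L k → A (φ k l) = lam k • φ k l + φ k (l - 1))
    (hbi : ∀ k l r s, 1 ≤ l → l ≤ L k → 1 ≤ s → s ≤ L r →
      ⟪ψ r s, φ k l⟫_ℂ = if (k, l) = (r, s) then 1 else 0)
    {c : ℕ → ℕ → ℂ} (hc : ∀ k l, ¬(1 ≤ l ∧ l ≤ L k) → c k l = 0)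
    {w : H} (hw : HasSum (fun p : ℕ × ℕ => c p.1 p.2 • φ p.1 p.2) w)
    (μ : ℂ) {r s : ℕ} (hs : 1 ≤ s) (hsL : s ≤ L r) :
    ⟪ψ r s, A w - μ • w⟫_ℂ = (lam r - μ) * c r s + c r (s + 1) := by
  let g : H →L[ℂ] ℂ := (innerSL ℂ (ψ r s)).comp (A - μ • ContinuousLinearMap.id ℂ H)
  have hg : ∀ x, g x = ⟪ψ r s, A x - μ • x⟫_ℂ := fun x => by simp [g]
  have hterm : ∀ p : ℕ × ℕ, g (c p.1 p.2 • φ p.1 p.2) =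
      c p.1 p.2 * (if p = (r, s) then lam p.1 - μ else 0)
        + c p.1 p.2 * if p = (r, s + 1) then 1 else 0 := by
    rintro ⟨k, l⟩
    rw [map_smul, smul_eq_mul, hg, ← mul_add]
    by_cases hkl : 1 ≤ l ∧ l ≤ L k
    · rw [inner_apply_sub_smul_jordanChain hchain1 hchain hbi μ hkl.1 hkl.2 hs hsL]
    · simp [hc k l hkl]
  have hsum := (hasSum_single (r, s) fun p hp => by simp [hp] : HasSum
      (fun p : ℕ × ℕ => c p.1 p.2 * if p = (r, s) then lam p.1 - μ else 0) _).add
    (hasSum_single (r, s + 1) fun p hp => by simp [hp] : HasSum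
      (fun p : ℕ × ℕ => c p.1 p.2 * if p = (r, s + 1) then 1 else 0) _)
  rw [← hg, (g.hasSum hw).unique (by simpa only [hterm] using hsum)]
  simp [mul_comm]

end JordanChain

theorem stmt_15_general {H : Type*}
    [NormedAddCommGroup H] [InnerProductSpace ℂ H]
    (A : H →L[ℂ] H)
    (L : ℕ → ℕ)
    (lam : ℕ → ℂ)
    (φ ψ : ℕ → ℕ → H)
    (hchain1 : ∀ k : ℕ, A (φ k 1) = lam k • φ k 1)
    (hchain : ∀ k : ℕ, ∀ l : ℕ, 2 ≤ l → l ≤ L k →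
      A (φ k l) = lam k • φ k l + φ k (l - 1))
    (hbi : ∀ k l r s : ℕ, 1 ≤ l → l ≤ L k → 1 ≤ s → s ≤ L r →
      (inner ℂ (ψ r s) (φ k l) : ℂ) = if (k, l) = (r, s) then 1 else 0)
    (a : ℕ → ℕ → ℂ) (w : H)
    (hw : HasSum (fun p : ℕ × ℕ =>
      if 1 ≤ p.2 ∧ p.2 ≤ L p.1 then a p.1 p.2 • φ p.1 p.2 else 0) w)
    (μ : ℂ) (hμ : ∀ k : ℕ, μ ≠ lam k)
    (horth : ∀ r s : ℕ, 1 ≤ s → s ≤ L r → (inner ℂ (ψ r s) (A w - μ • w) : ℂ) = 0) :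
    (∀ k l : ℕ, 1 ≤ l → l ≤ L k → a k l = 0) ∧ w = 0 := by
  set c : ℕ → ℕ → ℂ := fun k l => if 1 ≤ l ∧ l ≤ L k then a k l else 0 with hc_def
  have hc : ∀ k l, ¬(1 ≤ l ∧ l ≤ L k) → c k l = 0 := fun k l h => if_neg h
  have hw' : HasSum (fun p : ℕ × ℕ => c p.1 p.2 • φ p.1 p.2) w := by
    simpa only [hc_def, ite_smul, zero_smul] using hw
  have hrec : ∀ r s, 1 ≤ s → (lam r - μ) * c r s + c r (s + 1) = 0 := by
    intro r s hs
    by_cases hsL : s ≤ L r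
    · rw [← inner_apply_sub_smul_of_hasSum_jordanChain hchain1 hchain hbi hc hw' μ hs hsL,
        horth r s hs hsL]
    · rw [hc r s (by omega), hc r (s + 1) (by omega), mul_zero, add_zero]
  have hzero : ∀ k l, c k l = 0 := by
    intro k l
    obtain rfl | hl := Nat.eq_zero_or_pos l
    · exact hc k 0 (by omega)
    obtain ⟨n, rfl⟩ : ∃ n, l = n + 1 := ⟨l - 1, by omega⟩
    refine eq_zero_of_mul_add_succ_eq_zero (x := fun n => c k (n + 1)) (N := L k)
      (sub_ne_zero.mpr (hμ k).symm) (fun n => hrec k (n + 1) le_add_self)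
      (fun n hn => hc k (n + 1) (by omega)) n
  refine ⟨fun k l hl hlL => by simpa [hc_def, hl, hlL] using hzero k l, ?_⟩
  simp only [hzero, zero_smul] at hw'
  exact hw'.unique hasSum_zero

/-- converse direction of the generalized spectral problem for
non-simple spectrum: if `w = ∑_{k,l} a_{k,l} φ_{k,l}` in terms of a biorthogonal
Riesz system of Jordan chains `φ_{k,l}` of `A` (with dual family `ψ_{r,s}`),
`μ ≠ λ_k` for all `k`, and `⟨A w − μ w, ψ_{r,s}⟩ = 0` for all admissible `(r,s)`,
then all coefficients vanish and `w = 0`.  The paper's inner product `⟨a, b⟩`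
(linear in the first argument) is rendered as Mathlib's `inner b a`. -/
theorem stmt_15 {H : Type*}
    [NormedAddCommGroup H] [InnerProductSpace ℂ H] [CompleteSpace H]
    (A : H →L[ℂ] H)
    (L : ℕ → ℕ) (hL : ∀ k : ℕ, 1 ≤ L k)
    (lam : ℕ → ℂ)
    (φ ψ : ℕ → ℕ → H)
    (hchain1 : ∀ k : ℕ, A (φ k 1) = lam k • φ k 1)
    (hchain : ∀ k : ℕ, ∀ l : ℕ, 2 ≤ l → l ≤ L k →
      A (φ k l) = lam k • φ k l + φ k (l - 1))
    (hbi : ∀ k l r s : ℕ, 1 ≤ l → l ≤ L k → 1 ≤ s → s ≤ L r →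
      (inner ℂ (ψ r s) (φ k l) : ℂ) = if (k, l) = (r, s) then 1 else 0)
    (a : ℕ → ℕ → ℂ) (w : H)
    (hw : HasSum (fun p : ℕ × ℕ =>
      if 1 ≤ p.2 ∧ p.2 ≤ L p.1 then a p.1 p.2 • φ p.1 p.2 else 0) w)
    (μ : ℂ) (hμ : ∀ k : ℕ, μ ≠ lam k)
    (horth : ∀ r s : ℕ, 1 ≤ s → s ≤ L r → (inner ℂ (ψ r s) (A w - μ • w) : ℂ) = 0) :
    (∀ k l : ℕ, 1 ≤ l → l ≤ L k → a k l = 0) ∧ w = 0 :=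
  stmt_15_general A L lam φ ψ hchain1 hchain hbi a w hw μ hμ horth
end
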